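/- Backwards compatibility of GeDTs: Let f be a decision-tree classifier with leaf classifiers f^A returning the class proportions of training samples in cell A, and let p(x,y) be the corresponding GeDT where each leaf v computes a class-factorised density p_v(x,y) = p_v(x)·p_v(y) with p_v(y) the maximum-likelihood categorical over classes of samples in A_v. Then for every x with p(x) > 0 and every class y, the conditional distribution satisfies p(y | x) = f(x)(y). -/

import Mathlib

/-- A Generative Decision Tree: a tree-shaped probabilistic circuit consisting only of sum
nodes (with weighted children) and leaves computing densities over `X × Y` with support in a
cell of the feature space. -/
inductive GeDT (X Y : Type) : Type
  | leaf (cell : Set X) (p : X → Y → ℝ) : GeDT X Y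
  | sum (children : List (ℝ × GeDT X Y)) : GeDT X Y

namespace GeDT

variable {X Y : Type}

/- The function computed by a GeDT node. -/
mutual
  def eval : GeDT X Y → X → Y → ℝ
    | .leaf _ p, x, y => p x y
    | .sum cs, x, y => evalList cs x y
  def evalList : List (ℝ × GeDT X Y) → X → Y → ℝ
    | [], _, _ => 0
    | c :: cs, x, y => c.1 * eval c.2 x y + evalList cs x y
end

/- The support of a GeDT. -/
mutual
  def supp : GeDT X Y → Set X
    | .leaf c _ => c
    | .sum cs => suppList cs
  def suppList : List (ℝ × GeDT X Y) → Set X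
    | [] => ∅
    | c :: cs => supp c.2 ∪ suppList cs
end

/- Well-formedness: nonnegative leaves supported in their cells, convex sum weights,
pairwise disjoint children supports (determinism of the underlying tree partition). -/
mutual
  def wf : GeDT X Y → Prop
    | .leaf c p => (∀ x y, 0 ≤ p x y) ∧ (∀ x y, x ∉ c → p x y = 0)
    | .sum cs => wfList cs ∧ (cs.map Prod.fst).sum = 1 ∧
        cs.Pairwise (fun a b => Disjoint (supp a.2) (supp b.2))
  def wfList : List (ℝ × GeDT X Y) → Prop
    | [] => True
    | c :: cs => (0 ≤ c.1 ∧ wf c.2) ∧ wfList cs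
end

/- The list of leaves of a GeDT, each together with the list of sum weights along the
root-to-leaf path: entries `(Λ, cell, p)`. -/
mutual
  def leafPaths : GeDT X Y → List (List ℝ × Set X × (X → Y → ℝ))
    | .leaf c p => [([], c, p)]
    | .sum cs => leafPathsList cs
  def leafPathsList : List (ℝ × GeDT X Y) → List (List ℝ × Set X × (X → Y → ℝ))
    | [] => []
    | c :: cs => (leafPaths c.2).map (fun q => (c.1 :: q.1, q.2)) ++ leafPathsList cs
end


/-! The supports of the children of every sum node are pairwise disjoint, so at a point `x` of a
leaf cell every sum node on the way to that leaf receives contributions from one child only: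
`p(x, y)` is the product of the weights along the path times `p_v(x) p_v(y)`. The factor in front
of `p_v(y)` does not depend on `y`, so it cancels when the joint is normalised over `y`. -/

theorem _root_.div_sum_eq_of_forall_eq_mul {ι K : Type*} [Fintype ι] [Field K] {f g : ι → K}
    {c : K} (hfg : ∀ i, f i = c * g i) (hg : ∑ i, g i = 1) (hf : ∑ i, f i ≠ 0) (i : ι) :
    f i / ∑ j, f j = g i := by
  have hsum : ∑ j, f j = c := by simp only [hfg, ← Finset.mul_sum, hg, mul_one]
  rw [hsum] at hf ⊢
  rw [hfg, mul_div_cancel_left₀ _ hf]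

theorem mem_suppList_iff {x : X} {cs : List (ℝ × GeDT X Y)} :
    x ∈ suppList cs ↔ ∃ c ∈ cs, x ∈ supp c.2 := by
  induction cs with
  | nil => simp [suppList]
  | cons c cs ih => simp [suppList, ih]

mutual
  theorem mem_supp_of_mem_leafPaths {x : X} :
      ∀ (t : GeDT X Y) (q : List ℝ × Set X × (X → Y → ℝ)),
      q ∈ t.leafPaths → x ∈ q.2.1 → x ∈ t.supp
    | .leaf c p, q, hq, hx => by
        rw [leafPaths, List.mem_singleton] at hq
        subst hq
        exact hx
    | .sum cs, q, hq, hx => mem_suppList_of_mem_leafPathsList cs q hq hx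
  theorem mem_suppList_of_mem_leafPathsList {x : X} :
      ∀ (cs : List (ℝ × GeDT X Y)) (q : List ℝ × Set X × (X → Y → ℝ)),
      q ∈ leafPathsList cs → x ∈ q.2.1 → x ∈ suppList cs
    | c :: cs, q, hq, hx => by
        rw [leafPathsList, List.mem_append, List.mem_map] at hq
        rcases hq with ⟨r, hr, rfl⟩ | hq
        · exact Or.inl (mem_supp_of_mem_leafPaths c.2 r hr hx)
        · exact Or.inr (mem_suppList_of_mem_leafPathsList cs q hq hx)
end

mutual
  theorem eval_eq_zero_of_notMem_supp {x : X} {y : Y} :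
      ∀ (t : GeDT X Y), t.wf → x ∉ t.supp → t.eval x y = 0
    | .leaf _ _, hw, hx => hw.2 x y hx
    | .sum cs, hw, hx => evalList_eq_zero_of_notMem_suppList cs hw.1 hx
  theorem evalList_eq_zero_of_notMem_suppList {x : X} {y : Y} :
      ∀ (cs : List (ℝ × GeDT X Y)), wfList cs → x ∉ suppList cs → evalList cs x y = 0
    | [], _, _ => rfl
    | c :: cs, hw, hx => by
        rw [suppList, Set.mem_union, not_or] at hx
        rw [evalList, eval_eq_zero_of_notMem_supp c.2 hw.1.2 hx.1,
          evalList_eq_zero_of_notMem_suppList cs hw.2 hx.2, mul_zero, add_zero]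
end

mutual
  theorem eval_eq_prod_mul_of_mem_leafPaths {x : X} {y : Y} :
      ∀ (t : GeDT X Y), t.wf → ∀ (q : List ℝ × Set X × (X → Y → ℝ)),
      q ∈ t.leafPaths → x ∈ q.2.1 → t.eval x y = q.1.prod * q.2.2 x y
    | .leaf _ _, _, q, hq, _ => by
        rw [leafPaths, List.mem_singleton] at hq
        subst hq
        rw [List.prod_nil, one_mul]
        rfl
    | .sum cs, hw, q, hq, hx => evalList_eq_prod_mul_of_mem_leafPathsList cs hw.1 hw.2.2 q hq hx
  theorem evalList_eq_prod_mul_of_mem_leafPathsList {x : X} {y : Y} :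
      ∀ (cs : List (ℝ × GeDT X Y)), wfList cs →
      cs.Pairwise (fun a b => Disjoint (supp a.2) (supp b.2)) →
      ∀ (q : List ℝ × Set X × (X → Y → ℝ)), q ∈ leafPathsList cs → x ∈ q.2.1 →
      evalList cs x y = q.1.prod * q.2.2 x y
    | c :: cs, hw, hd, q, hq, hx => by
        rw [List.pairwise_cons] at hd
        rw [leafPathsList, List.mem_append, List.mem_map] at hq
        rw [evalList]
        rcases hq with ⟨r, hr, rfl⟩ | hq
        · have hxc : x ∈ supp c.2 := mem_supp_of_mem_leafPaths c.2 r hr hx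
          have hxcs : x ∉ suppList cs := fun hxcs => by
            obtain ⟨b, hb, hxb⟩ := mem_suppList_iff.1 hxcs
            exact Set.disjoint_left.1 (hd.1 b hb) hxc hxb
          rw [eval_eq_prod_mul_of_mem_leafPaths c.2 hw.1.2 r hr hx,
            evalList_eq_zero_of_notMem_suppList cs hw.2 hxcs, List.prod_cons]
          ring
        · have hxc : x ∉ supp c.2 := fun hxc => by
            obtain ⟨b, hb, hxb⟩ :=
              mem_suppList_iff.1 (mem_suppList_of_mem_leafPathsList cs q hq hx)
            exact Set.disjoint_left.1 (hd.1 b hb) hxc hxb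
          rw [eval_eq_zero_of_notMem_supp c.2 hw.1.2 hxc,
            evalList_eq_prod_mul_of_mem_leafPathsList cs hw.2 hd.2 q hq hx, mul_zero, zero_add]
end

/-- backwards compatibility of GeDTs. Let `t` be a well-formed GeDT whose leaf
containing `x` is class-factorised, `p_v(x, y) = px x * py y`, with `py` the (maximum
likelihood, i.e. class-proportion) categorical distribution over classes, `∑ y, py y = 1`.
The decision-tree classifier returns `f(x) = py`, the class proportions of the leaf cell
containing `x`. Then for every `x` with `p(x) > 0` and every class `y`, the GeDT conditional
equals the DT classifier: `p(y | x) = f(x)(y)`. -/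
theorem gedt_conditional_eq_dt_classifier [Fintype Y]
    (t : GeDT X Y) (ht : t.wf) (x : X)
    (hx : 0 < ∑ y, t.eval x y)
    (q : List ℝ × Set X × (X → Y → ℝ)) (hq : q ∈ t.leafPaths) (hxq : x ∈ q.2.1)
    (px : X → ℝ) (py : Y → ℝ)
    (hfact : ∀ x' y, q.2.2 x' y = px x' * py y)
    (hpy0 : ∀ y, 0 ≤ py y) (hpynorm : ∑ y, py y = 1) :
    ∀ y, t.eval x y / (∑ y', t.eval x y') = py y := by
  have heval : ∀ y, t.eval x y = (q.1.prod * px x) * py y := fun y => by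
    rw [eval_eq_prod_mul_of_mem_leafPaths t ht q hq hxq, hfact, mul_assoc]
  exact div_sum_eq_of_forall_eq_mul heval hpynorm hx.ne'

end GeDT
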